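/- Let X be a metric space, let φ be a lower semicontinuous submeasure on ℕ such that I_φ is an ideal on ℕ, and let x = (x_n) be a sequence in X. Then the set Λ_x(I_φ) of I_φ-limit points of x is an F_σ subset of X (it equals the countable union of the closed sets Λ_x(I_φ, q) over positive rational q). -/

import Mathlib

open Filter Topology MeasureTheory Set

noncomputable section

/-- A lower semicontinuous submeasure on `ℕ`:  `φ : P(ℕ) → [0,∞]` with `φ(∅) = 0`,
`φ({n}) < ∞`, monotone, subadditive, and `φ(A) = lim_n φ(A ∩ {0,…,n-1})`. -/
structure LSCSubmeasure where
  toFun : Set ℕ → ENNReal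
  empty' : toFun ∅ = 0
  singleton_lt_top' : ∀ n : ℕ, toFun {n} < ⊤
  mono' : ∀ ⦃A B : Set ℕ⦄, A ⊆ B → toFun A ≤ toFun B
  subadd' : ∀ A B : Set ℕ, toFun (A ∪ B) ≤ toFun A + toFun B
  lsc' : ∀ A : Set ℕ, Tendsto (fun n => toFun (A ∩ {m | m < n})) atTop (𝓝 (toFun A))

/-- `‖A‖_φ := lim_n φ(A \ {0,…,n-1})`; since the sequence is antitone, the limit
is the infimum. -/
def LSCSubmeasure.norm (φ : LSCSubmeasure) (A : Set ℕ) : ENNReal :=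
  ⨅ n : ℕ, φ.toFun (A \ {m | m < n})

/-- The (analytic P-)ideal `I_φ = {A : ‖A‖_φ = 0}` associated with `φ`. -/
def LSCSubmeasure.ideal (φ : LSCSubmeasure) : Set (Set ℕ) :=
  {A | φ.norm A = 0}

/-- `I` is an ideal on `ℕ`: closed under finite unions and subsets, contains all
finite sets, and is proper. -/
def IsIdealOnNat (I : Set (Set ℕ)) : Prop :=
  (∀ A B : Set ℕ, A ∈ I → B ∈ I → A ∪ B ∈ I) ∧
  (∀ A B : Set ℕ, A ⊆ B → B ∈ I → A ∈ I) ∧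
  (∀ A : Set ℕ, A.Finite → A ∈ I) ∧
  (Set.univ : Set ℕ) ∉ I

/-- Convergence of the subsequence `(x_n : n ∈ A)` to `l`. -/
def ConvergesAlong {X : Type*} [TopologicalSpace X] (x : ℕ → X) (A : Set ℕ) (l : X) : Prop :=
  Tendsto x (atTop ⊓ 𝓟 A) (𝓝 l)

/-- `Λ_x(I)`: the set of `I`-limit points of the sequence `x`. -/
def idealLimitPoints {X : Type*} [TopologicalSpace X] (I : Set (Set ℕ)) (x : ℕ → X) : Set X :=
  {l | ∃ A : Set ℕ, A ∉ I ∧ ConvergesAlong x A l}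

/-- `Γ_x(I)`: the set of `I`-cluster points of the sequence `x`. -/
def idealClusterPoints {X : Type*} [TopologicalSpace X] (I : Set (Set ℕ)) (x : ℕ → X) : Set X :=
  {l | ∀ U ∈ 𝓝 l, {n | x n ∈ U} ∉ I}

/-- `Λ_x(I_φ, q)`: the set of `ℓ` such that some subsequence `(x_n : n ∈ A)` with
`‖A‖_φ ≥ q` converges to `ℓ`. -/
def LambdaQ {X : Type*} [TopologicalSpace X] (φ : LSCSubmeasure) (x : ℕ → X) (q : ℝ) : Set X :=
  {l | ∃ A : Set ℕ, ENNReal.ofReal q ≤ φ.norm A ∧ ConvergesAlong x A l}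

/-- The summable ideal `I_f = {S : ∑_{n ∈ S} f(n) < ∞}`. -/
def summableIdeal (f : ℕ → ℝ) : Set (Set ℕ) := {S | Summable (S.indicator f)}

/-- `A` has asymptotic density `d`. -/
def HasDensity (A : Set ℕ) (d : ℝ) : Prop :=
  Tendsto (fun n => (∑ i ∈ Finset.range n, A.indicator (fun _ => (1 : ℝ)) i) / (n : ℝ))
    atTop (𝓝 d)

/-- `A_B := {a_b : b ∈ B}`, where `a_0 < a_1 < ⋯` is the increasing enumeration of `A`. -/
def sel (A B : Set ℕ) : Set ℕ := (fun b => Nat.nth (· ∈ A) b) '' B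

/-- `A ≤ B`: the increasing enumerations satisfy `a_n ≤ b_n` for all `n`. -/
def enumLE (A B : Set ℕ) : Prop := ∀ n : ℕ, Nat.nth (· ∈ A) n ≤ Nat.nth (· ∈ B) n

/-- `I` is weakly thinnable: `A_B ∉ I` whenever `A` has non-zero asymptotic density
and `B ∉ I`. -/
def WeaklyThinnable (I : Set (Set ℕ)) : Prop :=
  ∀ A B : Set ℕ, (∃ d : ℝ, 0 < d ∧ HasDensity A d) → B ∉ I → sel A B ∉ I

/-- `I` is thinnable: weakly thinnable, and moreover `B_A ∉ I` under the same
hypotheses, and `X ∉ I` whenever `X ≤ Y` and `Y ∉ I`. -/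
def Thinnable (I : Set (Set ℕ)) : Prop :=
  WeaklyThinnable I ∧
  (∀ A B : Set ℕ, (∃ d : ℝ, 0 < d ∧ HasDensity A d) → B ∉ I → sel B A ∉ I) ∧
  (∀ X Y : Set ℕ, enumLE X Y → Y ∉ I → X ∉ I)

/-- The analytic P-ideal `I_φ` is strongly thinnable. -/
def StronglyThinnable (φ : LSCSubmeasure) : Prop :=
  WeaklyThinnable φ.ideal ∧
  (∀ q : ℝ, 0 < q → ∀ A : Set ℕ, ∀ a : ℝ, 0 < a → HasDensity A a →
    ∃ c : ℝ, 0 < c ∧ ∀ B : Set ℕ, ENNReal.ofReal q ≤ φ.norm B →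
      ENNReal.ofReal (c * q) ≤ φ.norm (sel B A)) ∧
  (∃ c : ℝ, 0 < c ∧ ∀ X Y : Set ℕ, enumLE X Y →
    ENNReal.ofReal c * φ.norm Y ≤ φ.norm X)

/-- The `i`-th digit (0-indexed, so this is `d_{i+1}(ω)`) of the non-terminating
dyadic expansion of `ω ∈ (0,1]`. -/
def dyadicDigit (ω : ℝ) (i : ℕ) : ℕ :=
  (⌈(2 : ℝ) ^ (i + 1) * ω⌉ - 2 * ⌈(2 : ℝ) ^ i * ω⌉ + 1).toNat

/-- `x↾ω`: the subsequence of `x` indexed by the set `{i : d_i(ω) = 1}`. -/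
def subseq {X : Type*} (x : ℕ → X) (ω : ℝ) : ℕ → X :=
  fun k => x (Nat.nth (fun i => dyadicDigit ω i = 1) k)

/-- The Erdős–Ulam ideal `E_f` associated with a weight `f`. -/
def ErdosUlamIdeal (f : ℕ → ℝ) : Set (Set ℕ) :=
  {S | Tendsto (fun n => (∑ i ∈ Finset.Icc 1 n, S.indicator f i) /
        (∑ i ∈ Finset.Icc 1 n, f i)) atTop (𝓝 0)}

/-- The upper `α`-density `d_α^⋆(S)`. -/
def upperAlphaDensity (α : ℝ) (S : Set ℕ) : ℝ :=
  limsup (fun n => (∑ i ∈ Finset.Icc 1 n, S.indicator (fun i => (i : ℝ) ^ α) i) /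
    (∑ i ∈ Finset.Icc 1 n, (i : ℝ) ^ α)) atTop

/-- `S` has `α`-asymptotic density `d`. -/
def HasAlphaDensity (α : ℝ) (S : Set ℕ) (d : ℝ) : Prop :=
  Tendsto (fun n => (∑ i ∈ Finset.Icc 1 n, S.indicator (fun i => (i : ℝ) ^ α) i) /
    (∑ i ∈ Finset.Icc 1 n, (i : ℝ) ^ α)) atTop (𝓝 d)

/-- The ideal `I_α` of sets of zero upper `α`-density. -/
def Ialpha (α : ℝ) : Set (Set ℕ) := {S | upperAlphaDensity α S = 0}

/-!
`A ∉ I_φ` means `‖A‖_φ > 0`, so `Λ_x(I_φ)` is the union of the `Λ_x(I_φ, q)` over rational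
`q > 0`. Each `Λ_x(I_φ, q)` is closed by a diagonal argument: if `y_k → ℓ` with `y_k` witnessed
by `A_k`, lower semicontinuity of `φ` yields consecutive windows `[n_k, n_{k+1})` with
`φ(A_k ∩ [n_k, n_{k+1})) > q - 2^{-k}`, where `n_k` is so late that `x` is `2^{-k}`-close to
`y_k` along `A_k`. The union of these pieces has norm at least `q`, and `x` converges to `ℓ`
along it.
-/

theorem LSCSubmeasure.exists_lt_toFun_inter_Ico (φ : LSCSubmeasure) {A : Set ℕ}
    {r : ENNReal} (hr : r < φ.norm A) (N M₀ : ℕ) :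
    ∃ M, M₀ ≤ M ∧ r < φ.toFun (A ∩ Ico N M) := by
  have hN : r < φ.toFun (A \ {m | m < N}) := hr.trans_le (iInf_le _ N)
  obtain ⟨M, hM, hM₀⟩ :=
    (((φ.lsc' _).eventually (eventually_gt_nhds hN)).and (eventually_ge_atTop M₀)).exists
  refine ⟨M, hM₀, hM.trans_le (φ.mono' ?_)⟩
  rintro m ⟨⟨hmA, hNm⟩, hmM⟩
  exact ⟨hmA, not_lt.1 hNm, hmM⟩

def blockUnion (A : ℕ → Set ℕ) (n : ℕ → ℕ) : Set ℕ :=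
  ⋃ k, A k ∩ Ico (n k) (n (k + 1))

theorem LSCSubmeasure.le_norm_blockUnion (φ : LSCSubmeasure) {A : ℕ → Set ℕ} {n : ℕ → ℕ}
    (hn : StrictMono n) {r : ℕ → ENNReal} {c : ENNReal} (hr : Tendsto r atTop (𝓝 c))
    (h : ∀ k, r k ≤ φ.toFun (A k ∩ Ico (n k) (n (k + 1)))) :
    c ≤ φ.norm (blockUnion A n) := by
  refine le_iInf fun N => le_of_tendsto hr ?_
  filter_upwards [eventually_ge_atTop N] with k hk
  refine (h k).trans (φ.mono' fun m hm => ⟨mem_iUnion.2 ⟨k, hm⟩, ?_⟩)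
  exact not_lt.2 (hk.trans (hn.le_apply.trans hm.2.1))

theorem convergesAlong_blockUnion {X : Type*} [PseudoMetricSpace X] {x : ℕ → X} {l : X}
    {A : ℕ → Set ℕ} {n : ℕ → ℕ} (hn : StrictMono n) {ε : ℕ → ℝ}
    (hε : Tendsto ε atTop (𝓝 0))
    (h : ∀ k, ∀ m ∈ A k ∩ Ico (n k) (n (k + 1)), dist (x m) l < ε k) :
    ConvergesAlong x (blockUnion A n) l := by
  rw [ConvergesAlong, Metric.tendsto_nhds]
  intro δ hδ
  obtain ⟨K, hK⟩ := eventually_atTop.1 (hε.eventually (gt_mem_nhds hδ))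
  rw [eventually_inf_principal]
  filter_upwards [eventually_ge_atTop (n K)] with m hm hmS
  obtain ⟨j, hj⟩ := mem_iUnion.1 hmS
  have hKj : K ≤ j := by
    by_contra! hjK
    exact (hj.2.2.trans_le (hn.monotone hjK)).not_ge hm
  exact (h j m hj).trans (hK j hKj)

theorem lambdaQ_eq_univ_of_nonpos {X : Type*} [TopologicalSpace X] (φ : LSCSubmeasure)
    (x : ℕ → X) {q : ℝ} (hq : q ≤ 0) : LambdaQ φ x q = univ :=
  eq_univ_of_forall fun _ =>
    ⟨∅, by simp [ENNReal.ofReal_of_nonpos hq], by simp [ConvergesAlong]⟩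

theorem isClosed_lambdaQ {X : Type*} [PseudoMetricSpace X] (φ : LSCSubmeasure) (x : ℕ → X)
    (q : ℝ) : IsClosed (LambdaQ φ x q) := by
  rcases le_or_gt q 0 with hq | hq
  · rw [lambdaQ_eq_univ_of_nonpos φ x hq]
    exact isClosed_univ
  refine isClosed_of_closure_subset fun l hl => ?_
  have hδ : ∀ k : ℕ, (0 : ℝ) < (1 / 2) ^ k := fun k => by positivity
  have hδ₀ : Tendsto (fun k : ℕ => ((1 : ℝ) / 2) ^ k) atTop (𝓝 0) :=
    tendsto_pow_atTop_nhds_zero_of_lt_one (by norm_num) (by norm_num)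
  choose y hyΛ hyl using fun k => Metric.mem_closure_iff.1 hl _ (hδ k)
  choose A hAq hAy using hyΛ
  have hclose : ∀ k, ∃ N, ∀ m ≥ N, m ∈ A k → dist (x m) (y k) < (1 / 2) ^ k := fun k => by
    have h := Metric.tendsto_nhds.1 (hAy k) _ (hδ k)
    rw [eventually_inf_principal] at h
    exact eventually_atTop.1 h
  choose N hN using hclose
  have hr : ∀ k, ENNReal.ofReal (q - (1 / 2) ^ k) < φ.norm (A k) := fun k =>
    ((ENNReal.ofReal_lt_ofReal_iff hq).2 (by linarith [hδ k])).trans_le (hAq k)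
  choose M hM hMr using fun k a =>
    φ.exists_lt_toFun_inter_Ico (hr k) a (max (a + 1) (N (k + 1)))
  let n : ℕ → ℕ := fun k => Nat.rec (N 0) (fun k a => M k a) k
  have hn : StrictMono n :=
    strictMono_nat_of_lt_succ fun k => (le_max_left _ _).trans (hM k (n k))
  have hNn : ∀ k, N k ≤ n k
    | 0 => le_rfl
    | k + 1 => (le_max_right _ _).trans (hM k (n k))
  refine ⟨blockUnion A n, φ.le_norm_blockUnion hn ?_ fun k => (hMr k (n k)).le,
    convergesAlong_blockUnion hn (ε := fun k => 2 * (1 / 2) ^ k) ?_ fun k m hm => ?_⟩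
  · simpa using ENNReal.tendsto_ofReal (tendsto_const_nhds (x := q) |>.sub hδ₀)
  · simpa using hδ₀.const_mul 2
  · calc dist (x m) l ≤ dist (x m) (y k) + dist l (y k) := dist_triangle_right _ _ _
      _ < (1 / 2) ^ k + (1 / 2) ^ k := add_lt_add (hN k m ((hNn k).trans hm.2.1) hm.1) (hyl k)
      _ = 2 * (1 / 2) ^ k := by ring

theorem LSCSubmeasure.notMem_ideal_iff (φ : LSCSubmeasure) {A : Set ℕ} :
    A ∉ φ.ideal ↔ ∃ q : ℚ, 0 < q ∧ ENNReal.ofReal q ≤ φ.norm A := by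
  change φ.norm A ≠ 0 ↔ _
  constructor
  · intro h
    obtain ⟨q, -, hq0, hqA⟩ := ENNReal.lt_iff_exists_rat_btwn.1 (pos_iff_ne_zero.2 h)
    have hq : (0 : ℝ) < q := Real.toNNReal_pos.1 (by exact_mod_cast hq0)
    exact ⟨q, by exact_mod_cast hq, hqA.le⟩
  · rintro ⟨q, hq, hqA⟩ h
    rw [h, nonpos_iff_eq_zero, ENNReal.ofReal_eq_zero] at hqA
    exact hqA.not_gt (by exact_mod_cast hq)

theorem idealLimitPoints_eq_iUnion_lambdaQ {X : Type*} [TopologicalSpace X]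
    (φ : LSCSubmeasure) (x : ℕ → X) :
    idealLimitPoints φ.ideal x = ⋃ q ∈ {q : ℚ | 0 < q}, LambdaQ φ x (q : ℝ) := by
  ext l
  simp only [idealLimitPoints, LambdaQ, φ.notMem_ideal_iff, mem_ofPred_eq, mem_iUnion]
  constructor
  · rintro ⟨A, ⟨q, hq, hqA⟩, hA⟩
    exact ⟨q, hq, A, hqA, hA⟩
  · rintro ⟨q, hq, A, hqA, hA⟩
    exact ⟨A, ⟨q, hq, hqA⟩, hA⟩

theorem stmt1_general {X : Type*} [MetricSpace X] (φ : LSCSubmeasure) (x : ℕ → X) :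
    (∀ q : ℚ, 0 < q → IsClosed (LambdaQ φ x (q : ℝ))) ∧
    idealLimitPoints φ.ideal x = ⋃ q ∈ {q : ℚ | 0 < q}, LambdaQ φ x (q : ℝ) ∧
    ∃ F : ℕ → Set X, (∀ n, IsClosed (F n)) ∧ idealLimitPoints φ.ideal x = ⋃ n, F n := by
  have hΛ := idealLimitPoints_eq_iUnion_lambdaQ φ x
  refine ⟨fun q _ => isClosed_lambdaQ φ x q, hΛ, ?_⟩
  obtain ⟨f, hf⟩ := (Set.to_countable {q : ℚ | 0 < q}).exists_eq_range ⟨1, by simp⟩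
  refine ⟨fun n => LambdaQ φ x (f n), fun n => isClosed_lambdaQ φ x _, ?_⟩
  rw [hΛ, hf, biUnion_range]

/-- The set of `I_φ`-limit points of a sequence in a metric space is an
`F_σ`-set: each `Λ_x(I_φ, q)` is closed for rational `q > 0`, `Λ_x(I_φ)` is the countable
union of these closed sets, and hence is a countable union of closed sets. -/
theorem stmt1 {X : Type*} [MetricSpace X] (φ : LSCSubmeasure)
    (hI : IsIdealOnNat φ.ideal) (x : ℕ → X) :
    (∀ q : ℚ, 0 < q → IsClosed (LambdaQ φ x (q : ℝ))) ∧
    idealLimitPoints φ.ideal x = ⋃ q ∈ {q : ℚ | 0 < q}, LambdaQ φ x (q : ℝ) ∧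
    ∃ F : ℕ → Set X, (∀ n, IsClosed (F n)) ∧ idealLimitPoints φ.ideal x = ⋃ n, F n :=
  stmt1_general φ x
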